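/- Let X = {x, y} be a two-element subset of ZS_n. After column operations, suppose the 2×n matrix with rows x,y has a_1 columns equal to (1,1)ᵀ, a_2 columns equal to (1,-1)ᵀ, b_1 columns equal to (1,0)ᵀ, b_2 columns equal to (0,1)ᵀ, and c columns equal to (0,0)ᵀ (so a_1+a_2+b_1+b_2+c = n). Then |ZE(x) ∩ ZE(y)| = 3^c · (2^(b_1+b_2)(2^(a_1) + 2^(a_2)) - 2^(b_1+1) - 2^(b_2+1) + 2). -/
import Mathlib

open Finset
set_option maxHeartbeats 1000000



/-- A vector with entries in {-1,0,1}. -/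
def IsSignVec {n : ℕ} (s : Fin n → ℤ) : Prop :=
  ∀ i, s i = -1 ∨ s i = 0 ∨ s i = 1

/-- `ZS n`: nonzero sign vectors whose first nonzero entry is `1`. -/
def ZS (n : ℕ) : Set (Fin n → ℤ) :=
  {s | IsSignVec s ∧ ∃ i, s i = 1 ∧ ∀ j, j < i → s j = 0}

/-- `t` eliminates `s`: their supports intersect and on the common support
`t` agrees with `s` or with `-s`. -/
def Eliminates {n : ℕ} (t s : Fin n → ℤ) : Prop :=
  (∃ i, t i ≠ 0 ∧ s i ≠ 0) ∧
  (∃ k : ℤ, (k = 1 ∨ k = -1) ∧ ∀ i, s i ≠ 0 → t i ≠ 0 → t i = k * s i)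

/-- the set of elements of `ZS n` eliminated by some element of `X`. -/
def ZE {n : ℕ} (X : Set (Fin n → ℤ)) : Set (Fin n → ℤ) :=
  {s ∈ ZS n | ∃ t ∈ X, Eliminates t s}


def Kt {n : ℕ} (x y : Fin n → ℤ) (i : Fin n) : ℕ :=
  if x i = 1 then (if y i = 1 then 0 else if y i = -1 then 1 else 2)
  else if y i = 1 then 3 else 4

def ColOK {n : ℕ} (x y : Fin n → ℤ) (i : Fin n) : Prop :=
  (x i = 1 ∧ y i = 1) ∨ (x i = 1 ∧ y i = -1) ∨ (x i = 1 ∧ y i = 0) ∨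
  (x i = 0 ∧ y i = 1) ∨ (x i = 0 ∧ y i = 0)

lemma Kt_cases {n : ℕ} {x y : Fin n → ℤ} {i : Fin n} (h : ColOK x y i) :
    (Kt x y i = 0 ∧ x i = 1 ∧ y i = 1) ∨ (Kt x y i = 1 ∧ x i = 1 ∧ y i = -1) ∨
    (Kt x y i = 2 ∧ x i = 1 ∧ y i = 0) ∨ (Kt x y i = 3 ∧ x i = 0 ∧ y i = 1) ∨
    (Kt x y i = 4 ∧ x i = 0 ∧ y i = 0) := by
  rcases h with ⟨h1, h2⟩ | ⟨h1, h2⟩ | ⟨h1, h2⟩ | ⟨h1, h2⟩ | ⟨h1, h2⟩ <;>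
    simp [Kt, h1, h2]

def Qv {n : ℕ} (x y : Fin n → ℤ) (v : ℕ → Finset ℤ) : Finset (Fin n → ℤ) :=
  Fintype.piFinset fun i => v (Kt x y i)

lemma mem_Qv {n : ℕ} {x y : Fin n → ℤ} {v : ℕ → Finset ℤ} {s : Fin n → ℤ} :
    s ∈ Qv x y v ↔ ∀ i, s i ∈ v (Kt x y i) := Fintype.mem_piFinset

def V1 (σ : ℤ) : ℕ → Finset ℤ := fun j =>
  if j = 0 then {0,σ} else if j = 1 then {0} else if j = 2 then {0,σ}
  else if j = 3 then {0,σ} else {-1,0,1}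

def V2 (σ : ℤ) : ℕ → Finset ℤ := fun j =>
  if j = 0 then {0} else if j = 1 then {0,σ} else if j = 2 then {0,σ}
  else if j = 3 then {0,-σ} else {-1,0,1}

def V3 (σ₁ σ₂ : ℤ) : ℕ → Finset ℤ := fun j =>
  if j = 0 then {0} else if j = 1 then {0} else if j = 2 then {0,σ₁}
  else if j = 3 then {0,σ₂} else {-1,0,1}

def P1 {n : ℕ} (x y : Fin n → ℤ) (σ : ℤ) : Finset (Fin n → ℤ) :=
  Qv x y (V1 σ) \ Qv x y (V3 σ σ)

def P2 {n : ℕ} (x y : Fin n → ℤ) (σ : ℤ) : Finset (Fin n → ℤ) :=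
  Qv x y (V2 σ) \ Qv x y (V3 σ (-σ))

def P3 {n : ℕ} (x y : Fin n → ℤ) (σ₁ σ₂ : ℤ) : Finset (Fin n → ℤ) :=
  Qv x y (V3 σ₁ σ₂) \ (Qv x y (V3 0 σ₂) ∪ Qv x y (V3 σ₁ 0))

lemma mem_P1 {n : ℕ} {x y : Fin n → ℤ} {σ : ℤ} (hσ : σ ≠ 0) {s : Fin n → ℤ} :
    s ∈ P1 x y σ ↔ (∀ i, s i ∈ V1 σ (Kt x y i)) ∧ ∃ i, Kt x y i = 0 ∧ s i = σ := by
  simp only [P1, mem_sdiff, mem_Qv]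
  constructor
  · rintro ⟨h1, h2⟩
    refine ⟨h1, ?_⟩
    push_neg at h2
    obtain ⟨i, hi⟩ := h2
    have h1i := h1 i
    rcases eq_or_ne (Kt x y i) 0 with h0 | h0
    · rw [h0] at h1i hi
      simp [V1, V3] at h1i hi
      exact ⟨i, h0, by tauto⟩
    · exfalso
      apply hi
      have : V3 σ σ (Kt x y i) = V1 σ (Kt x y i) := by
        simp only [V1, V3, if_neg h0]
      rw [this]; exact h1i
  · rintro ⟨h1, i, h0, hs⟩
    refine ⟨h1, fun h2 => ?_⟩
    have := h2 i
    rw [h0] at this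
    simp [V3] at this
    exact hσ (hs ▸ this ▸ rfl)

lemma mem_P2 {n : ℕ} {x y : Fin n → ℤ} {σ : ℤ} (hσ : σ ≠ 0) {s : Fin n → ℤ} :
    s ∈ P2 x y σ ↔ (∀ i, s i ∈ V2 σ (Kt x y i)) ∧ ∃ i, Kt x y i = 1 ∧ s i = σ := by
  simp only [P2, mem_sdiff, mem_Qv]
  constructor
  · rintro ⟨h1, h2⟩
    refine ⟨h1, ?_⟩
    push_neg at h2
    obtain ⟨i, hi⟩ := h2
    have h1i := h1 i
    rcases eq_or_ne (Kt x y i) 1 with h0 | h0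
    · rw [h0] at h1i hi
      simp [V2, V3] at h1i hi
      exact ⟨i, h0, by tauto⟩
    · exfalso
      apply hi
      have : V3 σ (-σ) (Kt x y i) = V2 σ (Kt x y i) := by
        rcases eq_or_ne (Kt x y i) 0 with h|h <;>
        simp only [V2, V3, h, if_neg h0] <;> simp [h, h0]
      rw [this]; exact h1i
  · rintro ⟨h1, i, h0, hs⟩
    refine ⟨h1, fun h2 => ?_⟩
    have := h2 i
    rw [h0] at this
    simp [V3] at this
    exact hσ (hs ▸ this ▸ rfl)

lemma mem_P3 {n : ℕ} {x y : Fin n → ℤ} {σ₁ σ₂ : ℤ} (h₁ : σ₁ ≠ 0) (h₂ : σ₂ ≠ 0)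
    {s : Fin n → ℤ} :
    s ∈ P3 x y σ₁ σ₂ ↔ (∀ i, s i ∈ V3 σ₁ σ₂ (Kt x y i)) ∧
      (∃ i, Kt x y i = 2 ∧ s i = σ₁) ∧ (∃ i, Kt x y i = 3 ∧ s i = σ₂) := by
  simp only [P3, mem_sdiff, mem_union, not_or, mem_Qv]
  constructor
  · rintro ⟨h1, h2a, h2b⟩
    refine ⟨h1, ?_, ?_⟩
    · push_neg at h2a
      obtain ⟨i, hi⟩ := h2a
      have h1i := h1 i
      rcases eq_or_ne (Kt x y i) 2 with h0 | h0
      · rw [h0] at h1i hi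
        simp [V3] at h1i hi
        exact ⟨i, h0, by tauto⟩
      · exfalso
        apply hi
        have : V3 0 σ₂ (Kt x y i) = V3 σ₁ σ₂ (Kt x y i) := by
          simp only [V3]
          split_ifs <;> simp_all
        rw [this]; exact h1i
    · push_neg at h2b
      obtain ⟨i, hi⟩ := h2b
      have h1i := h1 i
      rcases eq_or_ne (Kt x y i) 3 with h0 | h0
      · rw [h0] at h1i hi
        simp [V3] at h1i hi
        exact ⟨i, h0, by tauto⟩
      · exfalso
        apply hi
        have : V3 σ₁ 0 (Kt x y i) = V3 σ₁ σ₂ (Kt x y i) := by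
          simp only [V3, if_neg h0]
        rw [this]; exact h1i
  · rintro ⟨h1, ⟨i, h0, hs⟩, ⟨i', h0', hs'⟩⟩
    refine ⟨h1, fun h2 => ?_, fun h2 => ?_⟩
    · have := h2 i
      rw [h0] at this
      simp [V3] at this
      omega
    · have := h2 i'
      rw [h0'] at this
      simp [V3] at this
      omega

lemma Kt_lt_five {n : ℕ} (x y : Fin n → ℤ) (i : Fin n) : Kt x y i < 5 := by
  unfold Kt; split_ifs <;> norm_num

lemma card_Qv {n : ℕ} (x y : Fin n → ℤ) (v : ℕ → Finset ℤ) :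
    (Qv x y v).card =
      (v 0).card ^ (Finset.univ.filter fun i => Kt x y i = 0).card *
      (v 1).card ^ (Finset.univ.filter fun i => Kt x y i = 1).card *
      (v 2).card ^ (Finset.univ.filter fun i => Kt x y i = 2).card *
      (v 3).card ^ (Finset.univ.filter fun i => Kt x y i = 3).card *
      (v 4).card ^ (Finset.univ.filter fun i => Kt x y i = 4).card := by
  rw [Qv, Fintype.card_piFinset]
  rw [← Finset.prod_fiberwise_of_maps_to
      (t := Finset.range 5) (g := Kt x y)
      (fun i _ => Finset.mem_range.mpr (Kt_lt_five x y i))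
      (fun i => (v (Kt x y i)).card)]
  have h : ∀ j, (∏ i ∈ Finset.univ.filter (fun i => Kt x y i = j), (v (Kt x y i)).card)
      = (v j).card ^ (Finset.univ.filter fun i => Kt x y i = j).card := by
    intro j
    rw [Finset.prod_congr rfl (fun i hi => by rw [(Finset.mem_filter.mp hi).2]),
      Finset.prod_const]
  show ∏ j ∈ Finset.range 5, _ = _
  rw [Finset.prod_range_succ, Finset.prod_range_succ, Finset.prod_range_succ,
    Finset.prod_range_succ, Finset.prod_range_one]
  rw [h 0, h 1, h 2, h 3, h 4]

def Eliminates' {n : ℕ} (t s : Fin n → ℤ) : Prop :=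
  (∃ i, t i ≠ 0 ∧ s i ≠ 0) ∧
  (∃ k : ℤ, (k = 1 ∨ k = -1) ∧ ∀ i, s i ≠ 0 → t i ≠ 0 → t i = k * s i)

lemma P1_sub {n : ℕ} {x y : Fin n → ℤ} (hcol : ∀ i, ColOK x y i) {σ : ℤ}
    (hσ : σ = 1 ∨ σ = -1) {s : Fin n → ℤ} (hs : s ∈ P1 x y σ) :
    IsSignVec s ∧ Eliminates' x s ∧ Eliminates' y s := by
  have hσ0 : σ ≠ 0 := by rcases hσ with h|h <;> simp [h]
  obtain ⟨hall, i, hKi, hsi⟩ := (mem_P1 hσ0).mp hs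
  have hsi0 : s i ≠ 0 := by rw [hsi]; exact hσ0
  have hxyi : x i = 1 ∧ y i = 1 := by
    rcases Kt_cases (hcol i) with ⟨h,hx',hy'⟩|⟨h,hx',hy'⟩|⟨h,hx',hy'⟩|⟨h,hx',hy'⟩|⟨h,hx',hy'⟩ <;>
      first | exact ⟨hx', hy'⟩ | omega
  refine ⟨?_, ⟨⟨i, by rw [hxyi.1]; exact one_ne_zero, hsi0⟩, σ, hσ, ?_⟩,
    ⟨⟨i, by rw [hxyi.2]; exact one_ne_zero, hsi0⟩, σ, hσ, ?_⟩⟩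
  · intro i'
    have hv := hall i'
    rcases Kt_cases (hcol i') with ⟨h,hx',hy'⟩|⟨h,hx',hy'⟩|⟨h,hx',hy'⟩|⟨h,hx',hy'⟩|⟨h,hx',hy'⟩ <;>
      rw [h] at hv <;> simp [V1] at hv <;> omega
  · intro i' hs' hx'
    have hv := hall i'
    rcases Kt_cases (hcol i') with ⟨h,hx1,hy1⟩|⟨h,hx1,hy1⟩|⟨h,hx1,hy1⟩|⟨h,hx1,hy1⟩|⟨h,hx1,hy1⟩ <;>
      rw [h] at hv <;> simp [V1] at hv <;> rw [hx1] <;> rcases hσ with h1|h1 <;> subst h1 <;>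
      first | omega | (exfalso; exact hx' hx1) | (exfalso; omega)
  · intro i' hs' hy'
    have hv := hall i'
    rcases Kt_cases (hcol i') with ⟨h,hx1,hy1⟩|⟨h,hx1,hy1⟩|⟨h,hx1,hy1⟩|⟨h,hx1,hy1⟩|⟨h,hx1,hy1⟩ <;>
      rw [h] at hv <;> simp [V1] at hv <;> rw [hy1] <;> rcases hσ with h1|h1 <;> subst h1 <;>
      first | omega | (exfalso; exact hy' hy1) | (exfalso; omega)

lemma P2_sub {n : ℕ} {x y : Fin n → ℤ} (hcol : ∀ i, ColOK x y i) {σ : ℤ}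
    (hσ : σ = 1 ∨ σ = -1) {s : Fin n → ℤ} (hs : s ∈ P2 x y σ) :
    IsSignVec s ∧ Eliminates' x s ∧ Eliminates' y s := by
  have hσ0 : σ ≠ 0 := by rcases hσ with h|h <;> simp [h]
  have hσ' : -σ = 1 ∨ -σ = -1 := by rcases hσ with h|h <;> simp [h]
  obtain ⟨hall, i, hKi, hsi⟩ := (mem_P2 hσ0).mp hs
  have hsi0 : s i ≠ 0 := by rw [hsi]; exact hσ0
  have hxyi : x i = 1 ∧ y i = -1 := by
    rcases Kt_cases (hcol i) with ⟨h,hx',hy'⟩|⟨h,hx',hy'⟩|⟨h,hx',hy'⟩|⟨h,hx',hy'⟩|⟨h,hx',hy'⟩ <;>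
      first | exact ⟨hx', hy'⟩ | omega
  refine ⟨?_, ⟨⟨i, by rw [hxyi.1]; exact one_ne_zero, hsi0⟩, σ, hσ, ?_⟩,
    ⟨⟨i, by rw [hxyi.2]; norm_num, hsi0⟩, -σ, hσ', ?_⟩⟩
  · intro i'
    have hv := hall i'
    rcases Kt_cases (hcol i') with ⟨h,hx',hy'⟩|⟨h,hx',hy'⟩|⟨h,hx',hy'⟩|⟨h,hx',hy'⟩|⟨h,hx',hy'⟩ <;>
      rw [h] at hv <;> simp [V2] at hv <;> omega
  · intro i' hs' hx'
    have hv := hall i'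
    rcases Kt_cases (hcol i') with ⟨h,hx1,hy1⟩|⟨h,hx1,hy1⟩|⟨h,hx1,hy1⟩|⟨h,hx1,hy1⟩|⟨h,hx1,hy1⟩ <;>
      rw [h] at hv <;> simp [V2] at hv <;> rw [hx1] <;> rcases hσ with h1|h1 <;> subst h1 <;>
      omega
  · intro i' hs' hy'
    have hv := hall i'
    rcases Kt_cases (hcol i') with ⟨h,hx1,hy1⟩|⟨h,hx1,hy1⟩|⟨h,hx1,hy1⟩|⟨h,hx1,hy1⟩|⟨h,hx1,hy1⟩ <;>
      rw [h] at hv <;> simp [V2] at hv <;> rw [hy1] <;> rcases hσ with h1|h1 <;> subst h1 <;>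
      omega

lemma P3_sub {n : ℕ} {x y : Fin n → ℤ} (hcol : ∀ i, ColOK x y i) {σ₁ σ₂ : ℤ}
    (hσ₁ : σ₁ = 1 ∨ σ₁ = -1) (hσ₂ : σ₂ = 1 ∨ σ₂ = -1) {s : Fin n → ℤ}
    (hs : s ∈ P3 x y σ₁ σ₂) :
    IsSignVec s ∧ Eliminates' x s ∧ Eliminates' y s := by
  have h10 : σ₁ ≠ 0 := by rcases hσ₁ with h|h <;> simp [h]
  have h20 : σ₂ ≠ 0 := by rcases hσ₂ with h|h <;> simp [h]
  obtain ⟨hall, ⟨i, hKi, hsi⟩, ⟨i', hKi', hsi'⟩⟩ := (mem_P3 h10 h20).mp hs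
  have hsi0 : s i ≠ 0 := by rw [hsi]; exact h10
  have hsi0' : s i' ≠ 0 := by rw [hsi']; exact h20
  have hxyi : x i = 1 ∧ y i = 0 := by
    rcases Kt_cases (hcol i) with ⟨h,hx',hy'⟩|⟨h,hx',hy'⟩|⟨h,hx',hy'⟩|⟨h,hx',hy'⟩|⟨h,hx',hy'⟩ <;>
      first | exact ⟨hx', hy'⟩ | omega
  have hxyi' : x i' = 0 ∧ y i' = 1 := by
    rcases Kt_cases (hcol i') with ⟨h,hx',hy'⟩|⟨h,hx',hy'⟩|⟨h,hx',hy'⟩|⟨h,hx',hy'⟩|⟨h,hx',hy'⟩ <;>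
      first | exact ⟨hx', hy'⟩ | omega
  refine ⟨?_, ⟨⟨i, by rw [hxyi.1]; exact one_ne_zero, hsi0⟩, σ₁, hσ₁, ?_⟩,
    ⟨⟨i', by rw [hxyi'.2]; exact one_ne_zero, hsi0'⟩, σ₂, hσ₂, ?_⟩⟩
  · intro j
    have hv := hall j
    rcases Kt_cases (hcol j) with ⟨h,hx',hy'⟩|⟨h,hx',hy'⟩|⟨h,hx',hy'⟩|⟨h,hx',hy'⟩|⟨h,hx',hy'⟩ <;>
      rw [h] at hv <;> simp [V3] at hv <;> omega
  · intro j hs' hx'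
    have hv := hall j
    rcases Kt_cases (hcol j) with ⟨h,hx1,hy1⟩|⟨h,hx1,hy1⟩|⟨h,hx1,hy1⟩|⟨h,hx1,hy1⟩|⟨h,hx1,hy1⟩ <;>
      rw [h] at hv <;> simp [V3] at hv <;> rw [hx1] <;>
      rcases hσ₁ with h1|h1 <;> subst h1 <;> omega
  · intro j hs' hy'
    have hv := hall j
    rcases Kt_cases (hcol j) with ⟨h,hx1,hy1⟩|⟨h,hx1,hy1⟩|⟨h,hx1,hy1⟩|⟨h,hx1,hy1⟩|⟨h,hx1,hy1⟩ <;>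
      rw [h] at hv <;> simp [V3] at hv <;> rw [hy1] <;>
      rcases hσ₂ with h1|h1 <;> subst h1 <;> omega

def WF {n : ℕ} (x y : Fin n → ℤ) : Finset (Fin n → ℤ) :=
  P1 x y 1 ∪ P1 x y (-1) ∪ P2 x y 1 ∪ P2 x y (-1) ∪ P3 x y 1 1 ∪ P3 x y 1 (-1) ∪
    P3 x y (-1) 1 ∪ P3 x y (-1) (-1)

lemma structure_iff {n : ℕ} {x y : Fin n → ℤ} (hcol : ∀ i, ColOK x y i) (s : Fin n → ℤ) :
    (IsSignVec s ∧ Eliminates' x s ∧ Eliminates' y s) ↔ s ∈ WF x y := by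
  constructor
  · rintro ⟨hsv, ⟨⟨i₁, hxi₁, hsi₁⟩, k₁, hk₁, hx1⟩, ⟨⟨i₂, hyi₂, hsi₂⟩, k₂, hk₂, hy1⟩⟩
    have hk₁0 : k₁ ≠ 0 := by rcases hk₁ with h|h <;> simp [h]
    have hk₂0 : k₂ ≠ 0 := by rcases hk₂ with h|h <;> simp [h]
    have hs_x : ∀ i, x i = 1 → s i ≠ 0 → s i = k₁ := by
      intro i hxi hsi
      have h := hx1 i hsi (by rw [hxi]; exact one_ne_zero)
      rw [hxi] at h
      rcases hk₁ with h1|h1 <;> subst h1 <;> linarith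
    have hs_y1 : ∀ i, y i = 1 → s i ≠ 0 → s i = k₂ := by
      intro i hyi hsi
      have h := hy1 i hsi (by rw [hyi]; exact one_ne_zero)
      rw [hyi] at h
      rcases hk₂ with h1|h1 <;> subst h1 <;> linarith
    have hs_y2 : ∀ i, y i = -1 → s i ≠ 0 → s i = -k₂ := by
      intro i hyi hsi
      have h := hy1 i hsi (by rw [hyi]; norm_num)
      rw [hyi] at h
      rcases hk₂ with h1|h1 <;> subst h1 <;> linarith
    simp only [WF, mem_union]
    by_cases hA1 : ∃ i, x i = 1 ∧ y i = 1 ∧ s i ≠ 0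
    · obtain ⟨i, hxi, hyi, hsi⟩ := hA1
      have e1 : s i = k₁ := hs_x i hxi hsi
      have e2 : s i = k₂ := hs_y1 i hyi hsi
      have hmem : s ∈ P1 x y k₁ := by
        refine (mem_P1 hk₁0).mpr ⟨?_, i, ?_, e1⟩
        · intro i'
          rcases Kt_cases (hcol i') with ⟨h,hx',hy'⟩|⟨h,hx',hy'⟩|⟨h,hx',hy'⟩|⟨h,hx',hy'⟩|⟨h,hx',hy'⟩ <;>
            rw [h] <;> simp [V1]
          · rcases eq_or_ne (s i') 0 with h0|h0
            · left; exact h0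
            · right; exact hs_x i' hx' h0
          · rcases eq_or_ne (s i') 0 with h0|h0
            · exact h0
            · exfalso
              have := hs_x i' hx' h0
              have := hs_y2 i' hy' h0
              omega
          · rcases eq_or_ne (s i') 0 with h0|h0
            · left; exact h0
            · right; exact hs_x i' hx' h0
          · rcases eq_or_ne (s i') 0 with h0|h0
            · left; exact h0
            · right; rw [hs_y1 i' hy' h0]; omega
          · exact hsv i'
        · rcases Kt_cases (hcol i) with ⟨h,hx',hy'⟩|⟨h,hx',hy'⟩|⟨h,hx',hy'⟩|⟨h,hx',hy'⟩|⟨h,hx',hy'⟩ <;>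
            omega
      rcases hk₁ with h1|h1 <;> rw [h1] at hmem
      · exact Or.inl (Or.inl (Or.inl (Or.inl (Or.inl (Or.inl (Or.inl hmem))))))
      · exact Or.inl (Or.inl (Or.inl (Or.inl (Or.inl (Or.inl (Or.inr hmem))))))
    · by_cases hA2 : ∃ i, x i = 1 ∧ y i = -1 ∧ s i ≠ 0
      · obtain ⟨i, hxi, hyi, hsi⟩ := hA2
        have e1 : s i = k₁ := hs_x i hxi hsi
        have e2 : s i = -k₂ := hs_y2 i hyi hsi
        push_neg at hA1
        have hmem : s ∈ P2 x y k₁ := by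
          refine (mem_P2 hk₁0).mpr ⟨?_, i, ?_, e1⟩
          · intro i'
            rcases Kt_cases (hcol i') with ⟨h,hx',hy'⟩|⟨h,hx',hy'⟩|⟨h,hx',hy'⟩|⟨h,hx',hy'⟩|⟨h,hx',hy'⟩ <;>
              rw [h] <;> simp [V2]
            · exact hA1 i' hx' hy'
            · rcases eq_or_ne (s i') 0 with h0|h0
              · left; exact h0
              · right; exact hs_x i' hx' h0
            · rcases eq_or_ne (s i') 0 with h0|h0
              · left; exact h0
              · right; exact hs_x i' hx' h0
            · rcases eq_or_ne (s i') 0 with h0|h0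
              · left; exact h0
              · right; rw [hs_y1 i' hy' h0]; omega
            · exact hsv i'
          · rcases Kt_cases (hcol i) with ⟨h,hx',hy'⟩|⟨h,hx',hy'⟩|⟨h,hx',hy'⟩|⟨h,hx',hy'⟩|⟨h,hx',hy'⟩ <;>
              omega
        rcases hk₁ with h1|h1 <;> rw [h1] at hmem
        · exact Or.inl (Or.inl (Or.inl (Or.inl (Or.inl (Or.inr hmem)))))
        · exact Or.inl (Or.inl (Or.inl (Or.inl (Or.inr hmem))))
      · push_neg at hA1 hA2
        have hxi₁' : x i₁ = 1 ∧ y i₁ = 0 := by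
          rcases Kt_cases (hcol i₁) with ⟨h,hx',hy'⟩|⟨h,hx',hy'⟩|⟨h,hx',hy'⟩|⟨h,hx',hy'⟩|⟨h,hx',hy'⟩
          · exact absurd hsi₁ (by simpa using hA1 i₁ hx' hy')
          · exact absurd hsi₁ (by simpa using hA2 i₁ hx' hy')
          · exact ⟨hx', hy'⟩
          · exact absurd hx' hxi₁
          · exact absurd hx' hxi₁
        have hyi₂' : x i₂ = 0 ∧ y i₂ = 1 := by
          rcases Kt_cases (hcol i₂) with ⟨h,hx',hy'⟩|⟨h,hx',hy'⟩|⟨h,hx',hy'⟩|⟨h,hx',hy'⟩|⟨h,hx',hy'⟩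
          · exact absurd hsi₂ (by simpa using hA1 i₂ hx' hy')
          · exact absurd hsi₂ (by simpa using hA2 i₂ hx' hy')
          · exact absurd hy' hyi₂
          · exact ⟨hx', hy'⟩
          · exact absurd hy' hyi₂
        have e1 : s i₁ = k₁ := hs_x i₁ hxi₁'.1 hsi₁
        have e2 : s i₂ = k₂ := hs_y1 i₂ hyi₂'.2 hsi₂
        have hmem : s ∈ P3 x y k₁ k₂ := by
          refine (mem_P3 hk₁0 hk₂0).mpr ⟨?_, ⟨i₁, ?_, e1⟩, ⟨i₂, ?_, e2⟩⟩
          · intro i'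
            rcases Kt_cases (hcol i') with ⟨h,hx',hy'⟩|⟨h,hx',hy'⟩|⟨h,hx',hy'⟩|⟨h,hx',hy'⟩|⟨h,hx',hy'⟩ <;>
              rw [h] <;> simp [V3]
            · exact hA1 i' hx' hy'
            · exact hA2 i' hx' hy'
            · rcases eq_or_ne (s i') 0 with h0|h0
              · left; exact h0
              · right; exact hs_x i' hx' h0
            · rcases eq_or_ne (s i') 0 with h0|h0
              · left; exact h0
              · right; exact hs_y1 i' hy' h0
            · exact hsv i'
          · rcases Kt_cases (hcol i₁) with ⟨h,hx',hy'⟩|⟨h,hx',hy'⟩|⟨h,hx',hy'⟩|⟨h,hx',hy'⟩|⟨h,hx',hy'⟩ <;>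
              omega
          · rcases Kt_cases (hcol i₂) with ⟨h,hx',hy'⟩|⟨h,hx',hy'⟩|⟨h,hx',hy'⟩|⟨h,hx',hy'⟩|⟨h,hx',hy'⟩ <;>
              omega
        rcases hk₁ with h1|h1 <;> rcases hk₂ with h2|h2 <;> rw [h1, h2] at hmem
        · exact Or.inl (Or.inl (Or.inl (Or.inr hmem)))
        · exact Or.inl (Or.inl (Or.inr hmem))
        · exact Or.inl (Or.inr hmem)
        · exact Or.inr hmem
  · intro hs
    simp only [WF, mem_union] at hs
    rcases hs with ((((((h|h)|h)|h)|h)|h)|h)|h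
    · exact P1_sub hcol (Or.inl rfl) h
    · exact P1_sub hcol (Or.inr rfl) h
    · exact P2_sub hcol (Or.inl rfl) h
    · exact P2_sub hcol (Or.inr rfl) h
    · exact P3_sub hcol (Or.inl rfl) (Or.inl rfl) h
    · exact P3_sub hcol (Or.inl rfl) (Or.inr rfl) h
    · exact P3_sub hcol (Or.inr rfl) (Or.inl rfl) h
    · exact P3_sub hcol (Or.inr rfl) (Or.inr rfl) h

lemma pdisj {n : ℕ} {x y : Fin n → ℤ} {P Q : Finset (Fin n → ℤ)} {j : ℕ} {α : ℤ}
    {B : Finset ℤ}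
    (h1 : ∀ s ∈ P, ∃ i, Kt x y i = j ∧ s i = α)
    (h2 : ∀ s ∈ Q, ∀ i, Kt x y i = j → s i ∈ B) (hα : α ∉ B) : Disjoint P Q := by
  rw [Finset.disjoint_left]
  intro s hsP hsQ
  obtain ⟨i, hK, hα'⟩ := h1 s hsP
  exact hα (hα' ▸ h2 s hsQ i hK)

lemma P1_ex {n : ℕ} {x y : Fin n → ℤ} {σ : ℤ} (hσ : σ ≠ 0) :
    ∀ s ∈ P1 x y σ, ∃ i, Kt x y i = 0 ∧ s i = σ := fun s hs => ((mem_P1 hσ).mp hs).2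

lemma P1_all {n : ℕ} {x y : Fin n → ℤ} {σ : ℤ} (hσ : σ ≠ 0) (j : ℕ) :
    ∀ s ∈ P1 x y σ, ∀ i, Kt x y i = j → s i ∈ V1 σ j := by
  intro s hs i h
  have := ((mem_P1 hσ).mp hs).1 i
  rwa [h] at this

lemma P2_ex {n : ℕ} {x y : Fin n → ℤ} {σ : ℤ} (hσ : σ ≠ 0) :
    ∀ s ∈ P2 x y σ, ∃ i, Kt x y i = 1 ∧ s i = σ := fun s hs => ((mem_P2 hσ).mp hs).2

lemma P2_all {n : ℕ} {x y : Fin n → ℤ} {σ : ℤ} (hσ : σ ≠ 0) (j : ℕ) :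
    ∀ s ∈ P2 x y σ, ∀ i, Kt x y i = j → s i ∈ V2 σ j := by
  intro s hs i h
  have := ((mem_P2 hσ).mp hs).1 i
  rwa [h] at this

lemma P3_ex2 {n : ℕ} {x y : Fin n → ℤ} {σ₁ σ₂ : ℤ} (h1 : σ₁ ≠ 0) (h2 : σ₂ ≠ 0) :
    ∀ s ∈ P3 x y σ₁ σ₂, ∃ i, Kt x y i = 2 ∧ s i = σ₁ :=
  fun s hs => ((mem_P3 h1 h2).mp hs).2.1

lemma P3_ex3 {n : ℕ} {x y : Fin n → ℤ} {σ₁ σ₂ : ℤ} (h1 : σ₁ ≠ 0) (h2 : σ₂ ≠ 0) :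
    ∀ s ∈ P3 x y σ₁ σ₂, ∃ i, Kt x y i = 3 ∧ s i = σ₂ :=
  fun s hs => ((mem_P3 h1 h2).mp hs).2.2

lemma P3_all {n : ℕ} {x y : Fin n → ℤ} {σ₁ σ₂ : ℤ} (h1 : σ₁ ≠ 0) (h2 : σ₂ ≠ 0) (j : ℕ) :
    ∀ s ∈ P3 x y σ₁ σ₂, ∀ i, Kt x y i = j → s i ∈ V3 σ₁ σ₂ j := by
  intro s hs i h
  have := ((mem_P3 h1 h2).mp hs).1 i
  rwa [h] at this

lemma card_WF {n : ℕ} (x y : Fin n → ℤ) :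
    (WF x y).card = (P1 x y 1).card + (P1 x y (-1)).card + (P2 x y 1).card +
      (P2 x y (-1)).card + (P3 x y 1 1).card + (P3 x y 1 (-1)).card +
      (P3 x y (-1) 1).card + (P3 x y (-1) (-1)).card := by
  have o0 : (1:ℤ) ≠ 0 := one_ne_zero
  have m0 : (-1:ℤ) ≠ 0 := by norm_num
  have d12 : Disjoint (P1 x y 1) (P1 x y (-1)) :=
    pdisj (P1_ex o0) (P1_all m0 0) (by decide)
  have d13 : Disjoint (P1 x y 1) (P2 x y 1) :=
    pdisj (P1_ex o0) (P2_all o0 0) (by decide)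
  have d14 : Disjoint (P1 x y 1) (P2 x y (-1)) :=
    pdisj (P1_ex o0) (P2_all m0 0) (by decide)
  have d15 : Disjoint (P1 x y 1) (P3 x y 1 1) :=
    pdisj (P1_ex o0) (P3_all o0 o0 0) (by decide)
  have d16 : Disjoint (P1 x y 1) (P3 x y 1 (-1)) :=
    pdisj (P1_ex o0) (P3_all o0 m0 0) (by decide)
  have d17 : Disjoint (P1 x y 1) (P3 x y (-1) 1) :=
    pdisj (P1_ex o0) (P3_all m0 o0 0) (by decide)
  have d18 : Disjoint (P1 x y 1) (P3 x y (-1) (-1)) :=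
    pdisj (P1_ex o0) (P3_all m0 m0 0) (by decide)
  have d23 : Disjoint (P1 x y (-1)) (P2 x y 1) :=
    pdisj (P1_ex m0) (P2_all o0 0) (by decide)
  have d24 : Disjoint (P1 x y (-1)) (P2 x y (-1)) :=
    pdisj (P1_ex m0) (P2_all m0 0) (by decide)
  have d25 : Disjoint (P1 x y (-1)) (P3 x y 1 1) :=
    pdisj (P1_ex m0) (P3_all o0 o0 0) (by decide)
  have d26 : Disjoint (P1 x y (-1)) (P3 x y 1 (-1)) :=
    pdisj (P1_ex m0) (P3_all o0 m0 0) (by decide)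
  have d27 : Disjoint (P1 x y (-1)) (P3 x y (-1) 1) :=
    pdisj (P1_ex m0) (P3_all m0 o0 0) (by decide)
  have d28 : Disjoint (P1 x y (-1)) (P3 x y (-1) (-1)) :=
    pdisj (P1_ex m0) (P3_all m0 m0 0) (by decide)
  have d34 : Disjoint (P2 x y 1) (P2 x y (-1)) :=
    pdisj (P2_ex o0) (P2_all m0 1) (by decide)
  have d35 : Disjoint (P2 x y 1) (P3 x y 1 1) :=
    pdisj (P2_ex o0) (P3_all o0 o0 1) (by decide)
  have d36 : Disjoint (P2 x y 1) (P3 x y 1 (-1)) :=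
    pdisj (P2_ex o0) (P3_all o0 m0 1) (by decide)
  have d37 : Disjoint (P2 x y 1) (P3 x y (-1) 1) :=
    pdisj (P2_ex o0) (P3_all m0 o0 1) (by decide)
  have d38 : Disjoint (P2 x y 1) (P3 x y (-1) (-1)) :=
    pdisj (P2_ex o0) (P3_all m0 m0 1) (by decide)
  have d45 : Disjoint (P2 x y (-1)) (P3 x y 1 1) :=
    pdisj (P2_ex m0) (P3_all o0 o0 1) (by decide)
  have d46 : Disjoint (P2 x y (-1)) (P3 x y 1 (-1)) :=
    pdisj (P2_ex m0) (P3_all o0 m0 1) (by decide)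
  have d47 : Disjoint (P2 x y (-1)) (P3 x y (-1) 1) :=
    pdisj (P2_ex m0) (P3_all m0 o0 1) (by decide)
  have d48 : Disjoint (P2 x y (-1)) (P3 x y (-1) (-1)) :=
    pdisj (P2_ex m0) (P3_all m0 m0 1) (by decide)
  have d56 : Disjoint (P3 x y 1 1) (P3 x y 1 (-1)) :=
    pdisj (P3_ex3 o0 o0) (P3_all o0 m0 3) (by decide)
  have d57 : Disjoint (P3 x y 1 1) (P3 x y (-1) 1) :=
    pdisj (P3_ex2 o0 o0) (P3_all m0 o0 2) (by decide)
  have d58 : Disjoint (P3 x y 1 1) (P3 x y (-1) (-1)) :=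
    pdisj (P3_ex2 o0 o0) (P3_all m0 m0 2) (by decide)
  have d67 : Disjoint (P3 x y 1 (-1)) (P3 x y (-1) 1) :=
    pdisj (P3_ex2 o0 m0) (P3_all m0 o0 2) (by decide)
  have d68 : Disjoint (P3 x y 1 (-1)) (P3 x y (-1) (-1)) :=
    pdisj (P3_ex2 o0 m0) (P3_all m0 m0 2) (by decide)
  have d78 : Disjoint (P3 x y (-1) 1) (P3 x y (-1) (-1)) :=
    pdisj (P3_ex3 m0 o0) (P3_all m0 m0 3) (by decide)
  rw [WF]
  rw [Finset.card_union_of_disjoint (by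
    simp [Finset.disjoint_union_left, d18, d28, d38, d48, d58, d68, d78])]
  rw [Finset.card_union_of_disjoint (by
    simp [Finset.disjoint_union_left, d17, d27, d37, d47, d57, d67])]
  rw [Finset.card_union_of_disjoint (by
    simp [Finset.disjoint_union_left, d16, d26, d36, d46, d56])]
  rw [Finset.card_union_of_disjoint (by
    simp [Finset.disjoint_union_left, d15, d25, d35, d45])]
  rw [Finset.card_union_of_disjoint (by
    simp [Finset.disjoint_union_left, d14, d24, d34])]
  rw [Finset.card_union_of_disjoint (by
    simp [Finset.disjoint_union_left, d13, d23])]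
  rw [Finset.card_union_of_disjoint d12]

lemma elim_neg {n : ℕ} {t s : Fin n → ℤ} (h : Eliminates' t s) : Eliminates' t (-s) := by
  obtain ⟨⟨i, hti, hsi⟩, k, hk, hall⟩ := h
  refine ⟨⟨i, hti, by simpa using hsi⟩, -k, by rcases hk with h|h <;> simp [h], ?_⟩
  intro i' hsi' hti'
  have := hall i' (by simpa using hsi') hti'
  simp only [Pi.neg_apply]
  rw [this]; ring

lemma signvec_neg {n : ℕ} {s : Fin n → ℤ} (h : IsSignVec s) : IsSignVec (-s) := by
  intro i
  have := h i
  simp only [Pi.neg_apply]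
  omega

def ZSnorm {n : ℕ} (s : Fin n → ℤ) : Prop := ∃ i, s i = 1 ∧ ∀ j, j < i → s j = 0

lemma zsnorm_iff {n : ℕ} {s : Fin n → ℤ} {i₀ : Fin n} (h0 : s i₀ ≠ 0)
    (hmin : ∀ j, j < i₀ → s j = 0) : ZSnorm s ↔ s i₀ = 1 := by
  constructor
  · rintro ⟨i, h1, h2⟩
    rcases lt_trichotomy i i₀ with h | h | h
    · exact absurd (hmin i h) (by rw [h1]; exact one_ne_zero)
    · rwa [h] at h1
    · exact absurd (h2 i₀ h) h0
  · intro h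
    exact ⟨i₀, h, hmin⟩

lemma zsnorm_neg_iff {n : ℕ} {s : Fin n → ℤ} (hsv : IsSignVec s)
    (hne : ∃ i, s i ≠ 0) : (ZSnorm (-s) ↔ ¬ ZSnorm s) := by
  have hne' : (Finset.univ.filter fun i => s i ≠ 0).Nonempty := by
    obtain ⟨i, hi⟩ := hne
    exact ⟨i, Finset.mem_filter.mpr ⟨Finset.mem_univ i, hi⟩⟩
  set i₀ := (Finset.univ.filter fun i => s i ≠ 0).min' hne' with hi₀
  have h0 : s i₀ ≠ 0 :=
    (Finset.mem_filter.mp (Finset.min'_mem _ hne')).2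
  have hmin : ∀ j, j < i₀ → s j = 0 := by
    intro j hj
    by_contra hj0
    exact absurd hj (not_lt.mpr (Finset.min'_le _ j
      (Finset.mem_filter.mpr ⟨Finset.mem_univ j, hj0⟩)))
  have h0' : (-s) i₀ ≠ 0 := by simpa using h0
  have hmin' : ∀ j, j < i₀ → (-s) j = 0 := by
    intro j hj
    simp [hmin j hj]
  rw [zsnorm_iff h0 hmin, zsnorm_iff h0' hmin']
  have := hsv i₀
  simp only [Pi.neg_apply]
  omega

instance {n : ℕ} : DecidablePred (fun s : Fin n → ℤ => ZSnorm s) := fun s =>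
  decidable_of_iff (∃ i, s i = 1 ∧ ∀ j, j < i → s j = 0) Iff.rfl

lemma card_WF_norm {n : ℕ} {x y : Fin n → ℤ} (hcol : ∀ i, ColOK x y i) :
    (WF x y).card = 2 * ((WF x y).filter (fun s => ZSnorm s)).card := by
  have hneg : ∀ s ∈ WF x y, (-s ∈ WF x y ∧ (∃ i, s i ≠ 0) ∧ IsSignVec s) := by
    intro s hs
    obtain ⟨hsv, hex, hey⟩ := (structure_iff hcol s).mpr hs
    refine ⟨(structure_iff hcol (-s)).mp ⟨signvec_neg hsv, elim_neg hex, elim_neg hey⟩,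
      ?_, hsv⟩
    obtain ⟨⟨i, _, hsi⟩, _⟩ := hex
    exact ⟨i, hsi⟩
  have hb : ((WF x y).filter (fun s => ¬ ZSnorm s)).card =
      ((WF x y).filter (fun s => ZSnorm s)).card := by
    apply Finset.card_bij (fun s _ => -s)
    · intro s hs
      simp only [Finset.mem_filter] at hs ⊢
      obtain ⟨hsW, hsn⟩ := hs
      obtain ⟨hW, hne, hsv⟩ := hneg s hsW
      exact ⟨hW, (zsnorm_neg_iff hsv hne).mpr hsn⟩
    · intro s _ t _ h
      exact neg_injective h
    · intro t ht
      simp only [Finset.mem_filter] at ht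
      obtain ⟨htW, htn⟩ := ht
      obtain ⟨hW, hne, hsv⟩ := hneg t htW
      refine ⟨-t, Finset.mem_filter.mpr ⟨hW, fun hc => ?_⟩, by simp⟩
      exact ((zsnorm_neg_iff hsv hne).mp hc) htn
  have h := Finset.card_filter_add_card_filter_not
    (s := WF x y) (p := fun s => ZSnorm s)
  omega

lemma Qv_subset {n : ℕ} (x y : Fin n → ℤ) {v w : ℕ → Finset ℤ} (h : ∀ j, v j ⊆ w j) :
    Qv x y v ⊆ Qv x y w := by
  intro s hs
  rw [mem_Qv] at hs ⊢
  exact fun i => h _ (hs i)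

lemma Qv_inter {n : ℕ} (x y : Fin n → ℤ) {v w u : ℕ → Finset ℤ}
    (h : ∀ j z, z ∈ v j ∧ z ∈ w j ↔ z ∈ u j) :
    Qv x y v ∩ Qv x y w = Qv x y u := by
  ext s
  simp only [Finset.mem_inter, mem_Qv, ← forall_and]
  exact forall_congr' fun i => h _ _

theorem stmt12 {n : ℕ} (x y : Fin n → ℤ) (hx : x ∈ ZS n) (hy : y ∈ ZS n) (hxy : x ≠ y)
    (a₁ a₂ b₁ b₂ c : ℕ)
    (ha₁ : a₁ = (Finset.univ.filter (fun i => x i = 1 ∧ y i = 1)).card)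
    (ha₂ : a₂ = (Finset.univ.filter (fun i => x i = 1 ∧ y i = -1)).card)
    (hb₁ : b₁ = (Finset.univ.filter (fun i => x i = 1 ∧ y i = 0)).card)
    (hb₂ : b₂ = (Finset.univ.filter (fun i => x i = 0 ∧ y i = 1)).card)
    (hc : c = (Finset.univ.filter (fun i => x i = 0 ∧ y i = 0)).card)
    (hsum : a₁ + a₂ + b₁ + b₂ + c = n) :
    ((ZE {x} ∩ ZE {y}).ncard : ℤ) =
      3 ^ c * (2 ^ (b₁ + b₂) * (2 ^ a₁ + 2 ^ a₂) - 2 ^ (b₁ + 1) - 2 ^ (b₂ + 1) + 2) := by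
  -- the five column-type sets
  set F0 := Finset.univ.filter (fun i => x i = 1 ∧ y i = 1) with hF0
  set F1 := Finset.univ.filter (fun i => x i = 1 ∧ y i = -1) with hF1
  set F2 := Finset.univ.filter (fun i => x i = 1 ∧ y i = 0) with hF2
  set F3 := Finset.univ.filter (fun i => x i = 0 ∧ y i = 1) with hF3
  set F4 := Finset.univ.filter (fun i => x i = 0 ∧ y i = 0) with hF4
  have e01 : Disjoint F0 F1 := by
    simp only [hF0, hF1, Finset.disjoint_left, Finset.mem_filter]
    rintro i ⟨-, -, h2⟩ ⟨-, -, h4⟩; omega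
  have e02 : Disjoint F0 F2 := by
    simp only [hF0, hF2, Finset.disjoint_left, Finset.mem_filter]
    rintro i ⟨-, -, h2⟩ ⟨-, -, h4⟩; omega
  have e03 : Disjoint F0 F3 := by
    simp only [hF0, hF3, Finset.disjoint_left, Finset.mem_filter]
    rintro i ⟨-, h1, -⟩ ⟨-, h3, -⟩; omega
  have e04 : Disjoint F0 F4 := by
    simp only [hF0, hF4, Finset.disjoint_left, Finset.mem_filter]
    rintro i ⟨-, h1, -⟩ ⟨-, h3, -⟩; omega
  have e12 : Disjoint F1 F2 := by
    simp only [hF1, hF2, Finset.disjoint_left, Finset.mem_filter]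
    rintro i ⟨-, -, h2⟩ ⟨-, -, h4⟩; omega
  have e13 : Disjoint F1 F3 := by
    simp only [hF1, hF3, Finset.disjoint_left, Finset.mem_filter]
    rintro i ⟨-, h1, -⟩ ⟨-, h3, -⟩; omega
  have e14 : Disjoint F1 F4 := by
    simp only [hF1, hF4, Finset.disjoint_left, Finset.mem_filter]
    rintro i ⟨-, h1, -⟩ ⟨-, h3, -⟩; omega
  have e23 : Disjoint F2 F3 := by
    simp only [hF2, hF3, Finset.disjoint_left, Finset.mem_filter]
    rintro i ⟨-, h1, -⟩ ⟨-, h3, -⟩; omega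
  have e24 : Disjoint F2 F4 := by
    simp only [hF2, hF4, Finset.disjoint_left, Finset.mem_filter]
    rintro i ⟨-, h1, -⟩ ⟨-, h3, -⟩; omega
  have e34 : Disjoint F3 F4 := by
    simp only [hF3, hF4, Finset.disjoint_left, Finset.mem_filter]
    rintro i ⟨-, -, h2⟩ ⟨-, -, h4⟩; omega
  have hu : F0 ∪ F1 ∪ F2 ∪ F3 ∪ F4 = Finset.univ := by
    apply Finset.eq_univ_of_card
    rw [Finset.card_union_of_disjoint (by
        simp [Finset.disjoint_union_left, e04, e14, e24, e34]),
      Finset.card_union_of_disjoint (by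
        simp [Finset.disjoint_union_left, e03, e13, e23]),
      Finset.card_union_of_disjoint (by
        simp [Finset.disjoint_union_left, e02, e12]),
      Finset.card_union_of_disjoint e01, Fintype.card_fin]
    omega
  have hcol : ∀ i, ColOK x y i := by
    intro i
    have hi : i ∈ F0 ∪ F1 ∪ F2 ∪ F3 ∪ F4 := by rw [hu]; exact Finset.mem_univ i
    simp only [Finset.mem_union, hF0, hF1, hF2, hF3, hF4, Finset.mem_filter,
      Finset.mem_univ, true_and] at hi
    unfold ColOK
    tauto
  -- fibers of the column-type map
  have hf0 : (Finset.univ.filter fun i => Kt x y i = 0) = F0 := by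
    ext i
    simp only [hF0, Finset.mem_filter, Finset.mem_univ, true_and]
    rcases Kt_cases (hcol i) with ⟨h,h1,h2⟩|⟨h,h1,h2⟩|⟨h,h1,h2⟩|⟨h,h1,h2⟩|⟨h,h1,h2⟩ <;>
      rw [h] <;> omega
  have hf1 : (Finset.univ.filter fun i => Kt x y i = 1) = F1 := by
    ext i
    simp only [hF1, Finset.mem_filter, Finset.mem_univ, true_and]
    rcases Kt_cases (hcol i) with ⟨h,h1,h2⟩|⟨h,h1,h2⟩|⟨h,h1,h2⟩|⟨h,h1,h2⟩|⟨h,h1,h2⟩ <;>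
      rw [h] <;> omega
  have hf2 : (Finset.univ.filter fun i => Kt x y i = 2) = F2 := by
    ext i
    simp only [hF2, Finset.mem_filter, Finset.mem_univ, true_and]
    rcases Kt_cases (hcol i) with ⟨h,h1,h2⟩|⟨h,h1,h2⟩|⟨h,h1,h2⟩|⟨h,h1,h2⟩|⟨h,h1,h2⟩ <;>
      rw [h] <;> omega
  have hf3 : (Finset.univ.filter fun i => Kt x y i = 3) = F3 := by
    ext i
    simp only [hF3, Finset.mem_filter, Finset.mem_univ, true_and]
    rcases Kt_cases (hcol i) with ⟨h,h1,h2⟩|⟨h,h1,h2⟩|⟨h,h1,h2⟩|⟨h,h1,h2⟩|⟨h,h1,h2⟩ <;>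
      rw [h] <;> omega
  have hf4 : (Finset.univ.filter fun i => Kt x y i = 4) = F4 := by
    ext i
    simp only [hF4, Finset.mem_filter, Finset.mem_univ, true_and]
    rcases Kt_cases (hcol i) with ⟨h,h1,h2⟩|⟨h,h1,h2⟩|⟨h,h1,h2⟩|⟨h,h1,h2⟩|⟨h,h1,h2⟩ <;>
      rw [h] <;> omega
  -- uniform cardinality formula
  have cQ : ∀ v : ℕ → Finset ℤ, (Qv x y v).card =
      (v 0).card ^ a₁ * (v 1).card ^ a₂ * (v 2).card ^ b₁ * (v 3).card ^ b₂ *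
        (v 4).card ^ c := by
    intro v
    rw [card_Qv, hf0, hf1, hf2, hf3, hf4, ← ha₁, ← ha₂, ← hb₁, ← hb₂, ← hc]
  -- numeric cardinalities of the boxes
  have cV1p : (Qv x y (V1 1)).card = 2^a₁ * 2^b₁ * 2^b₂ * 3^c := by
    rw [cQ]; norm_num [V1]
  have cV1m : (Qv x y (V1 (-1))).card = 2^a₁ * 2^b₁ * 2^b₂ * 3^c := by
    rw [cQ]; norm_num [V1]
  have cV2p : (Qv x y (V2 1)).card = 2^a₂ * 2^b₁ * 2^b₂ * 3^c := by
    rw [cQ]; norm_num [V2]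
  have cV2m : (Qv x y (V2 (-1))).card = 2^a₂ * 2^b₁ * 2^b₂ * 3^c := by
    rw [cQ]; norm_num [V2]
  have cV3pp : (Qv x y (V3 1 1)).card = 2^b₁ * 2^b₂ * 3^c := by
    rw [cQ]; norm_num [V3]
  have cV3pm : (Qv x y (V3 1 (-1))).card = 2^b₁ * 2^b₂ * 3^c := by
    rw [cQ]; norm_num [V3]
  have cV3mp : (Qv x y (V3 (-1) 1)).card = 2^b₁ * 2^b₂ * 3^c := by
    rw [cQ]; norm_num [V3]
  have cV3mm : (Qv x y (V3 (-1) (-1))).card = 2^b₁ * 2^b₂ * 3^c := by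
    rw [cQ]; norm_num [V3]
  have cV30p : (Qv x y (V3 0 1)).card = 2^b₂ * 3^c := by
    rw [cQ]; norm_num [V3]
  have cV30m : (Qv x y (V3 0 (-1))).card = 2^b₂ * 3^c := by
    rw [cQ]; norm_num [V3]
  have cV3p0 : (Qv x y (V3 1 0)).card = 2^b₁ * 3^c := by
    rw [cQ]; norm_num [V3]
  have cV3m0 : (Qv x y (V3 (-1) 0)).card = 2^b₁ * 3^c := by
    rw [cQ]; norm_num [V3]
  have cV300 : (Qv x y (V3 0 0)).card = 3^c := by
    rw [cQ]; norm_num [V3]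
  -- subset relations
  have s1 : Qv x y (V3 1 1) ⊆ Qv x y (V1 1) :=
    Qv_subset x y (by intro j; unfold V1 V3; split_ifs <;> decide)
  have s2 : Qv x y (V3 (-1) (-1)) ⊆ Qv x y (V1 (-1)) :=
    Qv_subset x y (by intro j; unfold V1 V3; split_ifs <;> decide)
  have s3 : Qv x y (V3 1 (-1)) ⊆ Qv x y (V2 1) :=
    Qv_subset x y (by intro j; unfold V2 V3; split_ifs <;> decide)
  have s4 : Qv x y (V3 (-1) 1) ⊆ Qv x y (V2 (-1)) :=
    Qv_subset x y (by intro j; unfold V2 V3; split_ifs <;> decide)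
  have s5 : Qv x y (V3 0 1) ∪ Qv x y (V3 1 0) ⊆ Qv x y (V3 1 1) :=
    Finset.union_subset
      (Qv_subset x y (by intro j; unfold V3; split_ifs <;> decide))
      (Qv_subset x y (by intro j; unfold V3; split_ifs <;> decide))
  have s6 : Qv x y (V3 0 (-1)) ∪ Qv x y (V3 1 0) ⊆ Qv x y (V3 1 (-1)) :=
    Finset.union_subset
      (Qv_subset x y (by intro j; unfold V3; split_ifs <;> decide))
      (Qv_subset x y (by intro j; unfold V3; split_ifs <;> decide))
  have s7 : Qv x y (V3 0 1) ∪ Qv x y (V3 (-1) 0) ⊆ Qv x y (V3 (-1) 1) :=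
    Finset.union_subset
      (Qv_subset x y (by intro j; unfold V3; split_ifs <;> decide))
      (Qv_subset x y (by intro j; unfold V3; split_ifs <;> decide))
  have s8 : Qv x y (V3 0 (-1)) ∪ Qv x y (V3 (-1) 0) ⊆ Qv x y (V3 (-1) (-1)) :=
    Finset.union_subset
      (Qv_subset x y (by intro j; unfold V3; split_ifs <;> decide))
      (Qv_subset x y (by intro j; unfold V3; split_ifs <;> decide))
  -- intersections
  have i5 : Qv x y (V3 0 1) ∩ Qv x y (V3 1 0) = Qv x y (V3 0 0) :=
    Qv_inter x y (by
      intro j z; unfold V3; split_ifs <;>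
        simp only [Finset.mem_insert, Finset.mem_singleton] <;> omega)
  have i6 : Qv x y (V3 0 (-1)) ∩ Qv x y (V3 1 0) = Qv x y (V3 0 0) :=
    Qv_inter x y (by
      intro j z; unfold V3; split_ifs <;>
        simp only [Finset.mem_insert, Finset.mem_singleton] <;> omega)
  have i7 : Qv x y (V3 0 1) ∩ Qv x y (V3 (-1) 0) = Qv x y (V3 0 0) :=
    Qv_inter x y (by
      intro j z; unfold V3; split_ifs <;>
        simp only [Finset.mem_insert, Finset.mem_singleton] <;> omega)
  have i8 : Qv x y (V3 0 (-1)) ∩ Qv x y (V3 (-1) 0) = Qv x y (V3 0 0) :=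
    Qv_inter x y (by
      intro j z; unfold V3; split_ifs <;>
        simp only [Finset.mem_insert, Finset.mem_singleton] <;> omega)
  -- piece cardinalities (ℕ)
  have w1 : (P1 x y 1).card + (Qv x y (V3 1 1)).card = (Qv x y (V1 1)).card :=
    Finset.card_sdiff_add_card_eq_card s1
  have w2 : (P1 x y (-1)).card + (Qv x y (V3 (-1) (-1))).card = (Qv x y (V1 (-1))).card :=
    Finset.card_sdiff_add_card_eq_card s2
  have w3 : (P2 x y 1).card + (Qv x y (V3 1 (-1))).card = (Qv x y (V2 1)).card :=
    Finset.card_sdiff_add_card_eq_card s3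
  have w4 : (P2 x y (-1)).card + (Qv x y (V3 (-1) 1)).card = (Qv x y (V2 (-1))).card :=
    Finset.card_sdiff_add_card_eq_card s4
  have w5 : (P3 x y 1 1).card + (Qv x y (V3 0 1) ∪ Qv x y (V3 1 0)).card =
      (Qv x y (V3 1 1)).card := Finset.card_sdiff_add_card_eq_card s5
  have w6 : (P3 x y 1 (-1)).card + (Qv x y (V3 0 (-1)) ∪ Qv x y (V3 1 0)).card =
      (Qv x y (V3 1 (-1))).card := Finset.card_sdiff_add_card_eq_card s6
  have w7 : (P3 x y (-1) 1).card + (Qv x y (V3 0 1) ∪ Qv x y (V3 (-1) 0)).card =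
      (Qv x y (V3 (-1) 1)).card := Finset.card_sdiff_add_card_eq_card s7
  have w8 : (P3 x y (-1) (-1)).card + (Qv x y (V3 0 (-1)) ∪ Qv x y (V3 (-1) 0)).card =
      (Qv x y (V3 (-1) (-1))).card := Finset.card_sdiff_add_card_eq_card s8
  have u5 : (Qv x y (V3 0 1) ∪ Qv x y (V3 1 0)).card + (Qv x y (V3 0 0)).card =
      (Qv x y (V3 0 1)).card + (Qv x y (V3 1 0)).card := by
    rw [← i5]; exact Finset.card_union_add_card_inter _ _
  have u6 : (Qv x y (V3 0 (-1)) ∪ Qv x y (V3 1 0)).card + (Qv x y (V3 0 0)).card =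
      (Qv x y (V3 0 (-1))).card + (Qv x y (V3 1 0)).card := by
    rw [← i6]; exact Finset.card_union_add_card_inter _ _
  have u7 : (Qv x y (V3 0 1) ∪ Qv x y (V3 (-1) 0)).card + (Qv x y (V3 0 0)).card =
      (Qv x y (V3 0 1)).card + (Qv x y (V3 (-1) 0)).card := by
    rw [← i7]; exact Finset.card_union_add_card_inter _ _
  have u8 : (Qv x y (V3 0 (-1)) ∪ Qv x y (V3 (-1) 0)).card + (Qv x y (V3 0 0)).card =
      (Qv x y (V3 0 (-1))).card + (Qv x y (V3 (-1) 0)).card := by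
    rw [← i8]; exact Finset.card_union_add_card_inter _ _
  -- identify the counted set
  have hT : ZE {x} ∩ ZE {y} = ↑((WF x y).filter (fun s => ZSnorm s)) := by
    ext s
    have ee : ∀ t u : Fin n → ℤ, Eliminates t u ↔ Eliminates' t u := fun _ _ => Iff.rfl
    have hzs : s ∈ ZS n ↔ IsSignVec s ∧ ZSnorm s := Iff.rfl
    simp only [Set.mem_inter_iff, ZE, Set.mem_setOf_eq, Set.mem_singleton_iff,
      exists_eq_left, Finset.coe_filter, Finset.mem_coe]
    rw [← structure_iff hcol s] at *
    constructor
    · rintro ⟨⟨hz1, he1⟩, hz2, he2⟩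
      obtain ⟨hsv, hnorm⟩ := hzs.mp hz1
      exact ⟨⟨hsv, (ee _ _).mp he1, (ee _ _).mp he2⟩, hnorm⟩
    · rintro ⟨⟨hsv, he1, he2⟩, hnorm⟩
      exact ⟨⟨hzs.mpr ⟨hsv, hnorm⟩, (ee _ _).mpr he1⟩, hzs.mpr ⟨hsv, hnorm⟩,
        (ee _ _).mpr he2⟩
  have hnc : ((ZE {x} ∩ ZE {y}).ncard : ℤ) =
      (((WF x y).filter (fun s => ZSnorm s)).card : ℤ) := by
    rw [hT, Set.ncard_coe_finset]
  rw [hnc]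
  have h2 := card_WF_norm hcol
  have hsc := card_WF x y
  have big : (2:ℤ) * (((WF x y).filter (fun s => ZSnorm s)).card : ℤ) =
      2 * (3 ^ c * (2 ^ (b₁ + b₂) * (2 ^ a₁ + 2 ^ a₂) - 2 ^ (b₁ + 1) - 2 ^ (b₂ + 1) + 2)) := by
    rw [cV1p] at w1
    rw [cV1m] at w2
    rw [cV2p] at w3
    rw [cV2m] at w4
    rw [cV3pp] at w1 w5
    rw [cV3pm] at w3 w6
    rw [cV3mp] at w4 w7
    rw [cV3mm] at w2 w8
    rw [cV30p] at u5 u7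
    rw [cV30m] at u6 u8
    rw [cV3p0] at u5 u6
    rw [cV3m0] at u7 u8
    rw [cV300] at u5 u6 u7 u8
    have zw1 : ((P1 x y 1).card : ℤ) + 2^b₁*2^b₂*3^c = 2^a₁*2^b₁*2^b₂*3^c := by
      exact_mod_cast w1
    have zw2 : ((P1 x y (-1)).card : ℤ) + 2^b₁*2^b₂*3^c = 2^a₁*2^b₁*2^b₂*3^c := by
      exact_mod_cast w2
    have zw3 : ((P2 x y 1).card : ℤ) + 2^b₁*2^b₂*3^c = 2^a₂*2^b₁*2^b₂*3^c := by
      exact_mod_cast w3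
    have zw4 : ((P2 x y (-1)).card : ℤ) + 2^b₁*2^b₂*3^c = 2^a₂*2^b₁*2^b₂*3^c := by
      exact_mod_cast w4
    have zw5 : ((P3 x y 1 1).card : ℤ) +
        ((Qv x y (V3 0 1) ∪ Qv x y (V3 1 0)).card : ℤ) = 2^b₁*2^b₂*3^c := by
      exact_mod_cast w5
    have zw6 : ((P3 x y 1 (-1)).card : ℤ) +
        ((Qv x y (V3 0 (-1)) ∪ Qv x y (V3 1 0)).card : ℤ) = 2^b₁*2^b₂*3^c := by
      exact_mod_cast w6
    have zw7 : ((P3 x y (-1) 1).card : ℤ) +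
        ((Qv x y (V3 0 1) ∪ Qv x y (V3 (-1) 0)).card : ℤ) = 2^b₁*2^b₂*3^c := by
      exact_mod_cast w7
    have zw8 : ((P3 x y (-1) (-1)).card : ℤ) +
        ((Qv x y (V3 0 (-1)) ∪ Qv x y (V3 (-1) 0)).card : ℤ) = 2^b₁*2^b₂*3^c := by
      exact_mod_cast w8
    have zu5 : ((Qv x y (V3 0 1) ∪ Qv x y (V3 1 0)).card : ℤ) + 3^c =
        2^b₂*3^c + 2^b₁*3^c := by exact_mod_cast u5
    have zu6 : ((Qv x y (V3 0 (-1)) ∪ Qv x y (V3 1 0)).card : ℤ) + 3^c =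
        2^b₂*3^c + 2^b₁*3^c := by exact_mod_cast u6
    have zu7 : ((Qv x y (V3 0 1) ∪ Qv x y (V3 (-1) 0)).card : ℤ) + 3^c =
        2^b₂*3^c + 2^b₁*3^c := by exact_mod_cast u7
    have zu8 : ((Qv x y (V3 0 (-1)) ∪ Qv x y (V3 (-1) 0)).card : ℤ) + 3^c =
        2^b₂*3^c + 2^b₁*3^c := by exact_mod_cast u8
    have zh2 : ((WF x y).card : ℤ) =
        2 * (((WF x y).filter (fun s => ZSnorm s)).card : ℤ) := by exact_mod_cast h2
    have zsc : ((WF x y).card : ℤ) = ((P1 x y 1).card : ℤ) + ((P1 x y (-1)).card : ℤ) +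
        ((P2 x y 1).card : ℤ) + ((P2 x y (-1)).card : ℤ) + ((P3 x y 1 1).card : ℤ) +
        ((P3 x y 1 (-1)).card : ℤ) + ((P3 x y (-1) 1).card : ℤ) +
        ((P3 x y (-1) (-1)).card : ℤ) := by exact_mod_cast hsc
    rw [pow_add, pow_succ, pow_succ]
    ring_nf
    ring_nf at zw1 zw2 zw3 zw4 zw5 zw6 zw7 zw8 zu5 zu6 zu7 zu8 zh2 zsc
    linarith
  have h2ne : (2:ℤ) ≠ 0 := by norm_num
  exact mul_left_cancel₀ h2ne big
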